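/- arXiv:2503.17611 — 9 statements merged into one kernel-verified Lean document; each statement's English description precedes it below -/
import Mathlib

section
/- Let A be a non-empty set of prime numbers. Then A is infinite if and only if A is a dense subset of the Macías space M(ℕ). -/
open Topology

/-- For `n` a positive natural, `σ_n = {m ∈ ℕ⁺ : gcd(n,m) = 1}`. -/
def sigmaSet (n : ℕ+) : Set ℕ+ := {m : ℕ+ | Nat.Coprime (n : ℕ) (m : ℕ)}

/-- The Macías topology `τ_M` on the positive naturals, generated by the sets `σ_n`. -/
def tauM : TopologicalSpace ℕ+ :=
  TopologicalSpace.generateFrom (Set.range sigmaSet)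

lemma sigma_basis {U : Set ℕ+}
    (hU : TopologicalSpace.GenerateOpen (Set.range sigmaSet) U) :
    ∀ x ∈ U, ∃ n : ℕ+, x ∈ sigmaSet n ∧ sigmaSet n ⊆ U := by
  induction hU with
  | basic V hV =>
      rintro x hx
      obtain ⟨n, rfl⟩ := hV
      exact ⟨n, hx, subset_rfl⟩
  | univ =>
      intro x _
      exact ⟨1, by simp [sigmaSet, Nat.Coprime], Set.subset_univ _⟩
  | inter U V hU hV ihU ihV =>
      rintro x ⟨hxU, hxV⟩
      obtain ⟨n, hn, hnU⟩ := ihU x hxU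
      obtain ⟨m, hm, hmV⟩ := ihV x hxV
      refine ⟨n * m, ?_, ?_⟩
      · simp only [sigmaSet, Set.mem_setOf_eq, PNat.mul_coe] at *
        exact Nat.Coprime.mul hn hm
      · intro y hy
        simp only [sigmaSet, Set.mem_setOf_eq, PNat.mul_coe] at hy
        exact ⟨hnU (Nat.Coprime.coprime_dvd_left (dvd_mul_right _ _) hy),
               hmV (Nat.Coprime.coprime_dvd_left (dvd_mul_left _ _) hy)⟩
  | sUnion S hS ih =>
      rintro x ⟨V, hV, hxV⟩
      obtain ⟨n, hn, hnV⟩ := ih V hV x hxV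
      exact ⟨n, hn, hnV.trans (Set.subset_sUnion_of_mem hV)⟩

theorem infinite_iff_dense (A : Set ℕ+) (hA : A.Nonempty)
    (hprime : ∀ p ∈ A, (p : ℕ).Prime) :
    A.Infinite ↔ @Dense ℕ+ tauM A := by
  letI : TopologicalSpace ℕ+ := tauM
  constructor
  · intro hinf
    rw [dense_iff_inter_open]
    intro U hU hUne
    obtain ⟨x, hx⟩ := hUne
    obtain ⟨n, _, hnU⟩ := sigma_basis hU x hx
    have hfin : {p : ℕ+ | (p : ℕ) ∣ (n : ℕ)}.Finite := by
      apply (Set.finite_Icc (1 : ℕ+) n).subset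
      intro p hp
      exact ⟨p.one_le, by exact_mod_cast Nat.le_of_dvd n.pos hp⟩
    obtain ⟨p, hpA, hpnd⟩ := (hinf.diff hfin).nonempty
    refine ⟨p, hnU ?_, hpA⟩
    exact ((hprime p hpA).coprime_iff_not_dvd.mpr hpnd).symm
  · intro hdense
    by_contra hfin
    rw [Set.not_infinite] at hfin
    set F := hfin.toFinset with hF
    set N : ℕ+ := ∏ p ∈ F, p with hN
    have hopen : @IsOpen _ tauM (sigmaSet N) :=
      TopologicalSpace.GenerateOpen.basic _ ⟨N, rfl⟩
    have hne : (sigmaSet N).Nonempty := ⟨1, by simp [sigmaSet, Nat.Coprime]⟩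
    obtain ⟨q, hqσ, hqA⟩ := (dense_iff_inter_open.mp hdense) (sigmaSet N) hopen hne
    have hqF : q ∈ F := hfin.mem_toFinset.mpr hqA
    have hdvd : (q : ℕ) ∣ (N : ℕ) := by
      have h : q ∣ N := Finset.dvd_prod_of_mem _ hqF
      exact PNat.dvd_iff.mp h
    have hcop : Nat.Coprime (N : ℕ) (q : ℕ) := hqσ
    have : (q : ℕ) = 1 := by
      have h1 := Nat.gcd_eq_left hdvd
      have h2 : Nat.gcd (q : ℕ) (N : ℕ) = 1 := Nat.coprime_comm.mp hcop
      omega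
    exact (hprime q hqA).one_lt.ne' this
end

section
/- Let f : ℕ → ℕ be a polynomial function, i.e. f(x) = Σ_{k=0}^{n} a_k x^k for some n ≥ 0 and coefficients a_0, a_1, …, a_n ∈ ℕ ∪ {0}, mapping positive naturals to positive naturals. Then f is continuous as a map from M(ℕ) to M(ℕ) if and only if for every prime number p, the preimage f⁻¹(σ_p) equals σ_p, equals all of ℕ, or is empty. -/
open Topology

/-- `f : ℕ⁺ → ℕ⁺` is a polynomial function with coefficients in `ℕ ∪ {0}`. -/
def IsPolyFun (f : ℕ+ → ℕ+) : Prop :=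
  ∃ (n : ℕ) (a : ℕ → ℕ),
    ∀ x : ℕ+, (f x : ℕ) = ∑ k ∈ Finset.range (n + 1), a k * (x : ℕ) ^ k

/-!
A polynomial with natural coefficients respects congruences modulo `p`, so `f⁻¹(σ_p)` is a union
of residue classes mod `p`. Since `σ_n = ⋂_{p ∣ n} σ_p`, continuity only has to be tested on the
sets `σ_p` with `p` prime. The sets `σ_n` form a basis, so a nonempty open set contains some `σ_n`;
by the Chinese remainder theorem `σ_n` meets every residue class mod `p` prime to `p`. Hence a
nonempty open union of residue classes mod `p` contains `σ_p`, and it is `σ_p` or everything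
according to whether it misses or contains the class of `0`.
-/

open TopologicalSpace

lemma sigmaSet_mul (m n : ℕ+) : sigmaSet (m * n) = sigmaSet m ∩ sigmaSet n := by
  ext
  simp [sigmaSet, Nat.coprime_mul_iff_left]

lemma sigmaSet_one : sigmaSet 1 = Set.univ := by
  ext
  simp [sigmaSet]

lemma isTopologicalBasis_sigmaSet : @IsTopologicalBasis ℕ+ tauM (Set.range sigmaSet) := by
  refine @IsTopologicalBasis.mk _ tauM _ ?_ ?_ rfl
  · rintro _ ⟨m, rfl⟩ _ ⟨n, rfl⟩ x hx
    exact ⟨sigmaSet (m * n), ⟨m * n, rfl⟩, by rwa [sigmaSet_mul], (sigmaSet_mul m n).le⟩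
  · exact Set.sUnion_eq_univ_iff.2 fun _ => ⟨sigmaSet 1, ⟨1, rfl⟩, by simp [sigmaSet_one]⟩

lemma isOpen_sigmaSet (n : ℕ+) : IsOpen[tauM] (sigmaSet n) :=
  isOpen_generateFrom_of_mem ⟨n, rfl⟩

lemma continuous_tauM_iff {X : Type*} [TopologicalSpace X] {f : X → ℕ+} :
    Continuous[_, tauM] f ↔ ∀ p : ℕ+, (p : ℕ).Prime → IsOpen (f ⁻¹' sigmaSet p) := by
  rw [tauM, continuous_generateFrom_iff, Set.forall_mem_range]
  refine ⟨fun h p _ => h p, fun h n => ?_⟩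
  suffices key : ∀ k : ℕ, k ≠ 0 → IsOpen (f ⁻¹' {m : ℕ+ | Nat.Coprime k m}) from
    key n n.ne_zero
  intro k
  induction k using Nat.recOnMul with
  | zero => exact absurd rfl
  | one => simp
  | prime p hp => exact fun _ => h ⟨p, hp.pos⟩ hp
  | mul a b ha hb =>
    intro hab
    have hsplit : f ⁻¹' {m : ℕ+ | Nat.Coprime (a * b) m} =
        f ⁻¹' {m : ℕ+ | Nat.Coprime a m} ∩ f ⁻¹' {m : ℕ+ | Nat.Coprime b m} :=
      Set.ext fun _ => Nat.coprime_mul_iff_left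
    rw [hsplit]
    exact (ha (left_ne_zero_of_mul hab)).inter (hb (right_ne_zero_of_mul hab))

lemma mem_sigmaSet_iff_of_modEq {n a b : ℕ+} (h : (a : ℕ) ≡ b [MOD n]) :
    a ∈ sigmaSet n ↔ b ∈ sigmaSet n := by
  simp only [sigmaSet, Set.mem_ofPred_eq, Nat.coprime_comm (n := (n : ℕ)), Nat.Coprime, h.gcd_eq]

lemma modEq_self_of_notMem_sigmaSet {p : ℕ+} (hp : (p : ℕ).Prime) {z : ℕ+} (hz : z ∉ sigmaSet p) :
    (z : ℕ) ≡ p [MOD p] := by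
  have hdvd : (p : ℕ) ∣ z := by
    by_contra hndvd
    exact hz ((Nat.Prime.coprime_iff_not_dvd hp).2 hndvd)
  exact (Nat.modEq_zero_iff_dvd.2 hdvd).trans (Nat.modEq_zero_iff_dvd.2 dvd_rfl).symm

lemma exists_mem_sigmaSet_modEq {p : ℕ} (hp : p.Prime) (n : ℕ+) {y : ℕ} (hy : ¬p ∣ y) :
    ∃ x : ℕ+, x ∈ sigmaSet n ∧ (x : ℕ) ≡ y [MOD p] := by
  obtain ⟨x, hxp, hxm⟩ := Nat.chineseRemainder (Nat.coprime_ordCompl hp n.ne_zero) y 1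
  have hpx : Nat.Coprime p x := by
    rw [Nat.coprime_comm, Nat.Coprime, hxp.gcd_eq, Nat.gcd_comm]
    exact (Nat.Prime.coprime_iff_not_dvd hp).2 hy
  have hmx : Nat.Coprime (ordCompl[p] n) x := by
    rw [Nat.coprime_comm, Nat.Coprime, hxm.gcd_eq, Nat.gcd_one_left]
  -- `x ≠ 0` because `p ∤ x`.
  have hx : 0 < x := Nat.pos_of_ne_zero fun h0 => hp.one_lt.ne' (by simpa [h0] using hpx)
  refine ⟨⟨x, hx⟩, ?_, hxp⟩
  change Nat.Coprime n x
  rw [← Nat.ordProj_mul_ordCompl_eq_self (n : ℕ) p]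
  exact (hpx.pow_left _).mul_left hmx

lemma sigmaSet_subset_of_isOpen {p : ℕ+} (hp : (p : ℕ).Prime) {U : Set ℕ+}
    (hU : IsOpen[tauM] U) (hne : U.Nonempty)
    (hmod : ∀ x y : ℕ+, (x : ℕ) ≡ y [MOD p] → x ∈ U → y ∈ U) :
    sigmaSet p ⊆ U := by
  obtain ⟨x₀, hx₀⟩ := hne
  obtain ⟨_, ⟨n, rfl⟩, -, hnU⟩ :=
    isTopologicalBasis_sigmaSet.exists_subset_of_mem_open (t := tauM) hx₀ hU
  intro y hy
  obtain ⟨x, hxn, hxy⟩ :=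
    exists_mem_sigmaSet_modEq hp n ((Nat.Prime.coprime_iff_not_dvd hp).1 hy)
  exact hmod x y hxy (hnU hxn)

lemma isOpen_tauM_iff_of_modEq {p : ℕ+} (hp : (p : ℕ).Prime) {U : Set ℕ+}
    (hmod : ∀ x y : ℕ+, (x : ℕ) ≡ y [MOD p] → x ∈ U → y ∈ U) :
    IsOpen[tauM] U ↔ U = sigmaSet p ∨ U = Set.univ ∨ U = ∅ := by
  refine ⟨fun hU => ?_, ?_⟩
  · rcases U.eq_empty_or_nonempty with hempty | hne
    · exact .inr (.inr hempty)
    have hsub := sigmaSet_subset_of_isOpen hp hU hne hmod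
    by_cases hpU : p ∈ U
    · refine .inr (.inl (Set.eq_univ_of_forall fun z => ?_))
      by_cases hz : z ∈ sigmaSet p
      · exact hsub hz
      · exact hmod p z (modEq_self_of_notMem_sigmaSet hp hz).symm hpU
    · refine .inl (hsub.antisymm' fun z hzU => ?_)
      by_contra hz
      exact hpU (hmod z p (modEq_self_of_notMem_sigmaSet hp hz) hzU)
  · rintro (rfl | rfl | rfl)
    exacts [isOpen_sigmaSet p, @isOpen_univ _ tauM, @isOpen_empty _ tauM]

lemma IsPolyFun.modEq {f : ℕ+ → ℕ+} (hf : IsPolyFun f) {n : ℕ} {x y : ℕ+}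
    (h : (x : ℕ) ≡ y [MOD n]) : (f x : ℕ) ≡ f y [MOD n] := by
  obtain ⟨d, a, ha⟩ := hf
  rw [ha x, ha y]
  exact Nat.ModEq.sum fun k _ => (h.pow k).mul_left (a k)

theorem poly_continuous_iff (f : ℕ+ → ℕ+) (hf : IsPolyFun f) :
    Continuous[tauM, tauM] f ↔
      ∀ p : ℕ+, (p : ℕ).Prime →
        f ⁻¹' sigmaSet p = sigmaSet p ∨ f ⁻¹' sigmaSet p = Set.univ ∨
          f ⁻¹' sigmaSet p = ∅ := by
  rw [@continuous_tauM_iff _ tauM]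
  refine forall₂_congr fun p hp => isOpen_tauM_iff_of_modEq hp fun x y hxy => ?_
  exact (mem_sigmaSet_iff_of_modEq (hf.modEq hxy)).1
end

section
/- For every n ∈ ℕ ∪ {0}, the function f : ℕ → ℕ given by f(x) = x^n is continuous as a map from the Macías space M(ℕ) to itself. -/
open Topology

theorem pow_continuous (n : ℕ) :
    Continuous[tauM, tauM] (fun x : ℕ+ => x ^ n) := by
  cases n with
  | zero =>
    simpa using (@continuous_const ℕ+ ℕ+ tauM tauM 1)
  | succ k =>
    rw [tauM, continuous_generateFrom_iff]
    rintro s ⟨m, rfl⟩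
    have h : (fun x : ℕ+ => x ^ (k + 1)) ⁻¹' sigmaSet m = sigmaSet m := by
      ext x
      simp only [sigmaSet, Set.mem_preimage, Set.mem_setOf_eq, PNat.pow_coe]
      exact Nat.coprime_pow_right_iff k.succ_pos _ _
    rw [h]
    exact TopologicalSpace.GenerateOpen.basic _ ⟨m, rfl⟩
end

section
/- The multiplication map (m, n) ↦ m·n from M(ℕ) × M(ℕ) (with the product topology) to M(ℕ) is continuous; that is, M(ℕ) with multiplication is a topological semigroup. -/
open Topology

theorem mul_continuous :
    @Continuous (ℕ+ × ℕ+) ℕ+ (@instTopologicalSpaceProd ℕ+ ℕ+ tauM tauM) tauM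
      (fun p : ℕ+ × ℕ+ => p.1 * p.2) := by
  letI : TopologicalSpace ℕ+ := tauM
  apply continuous_generateFrom_iff.2
  rintro s ⟨n, rfl⟩
  have hpre : (fun p : ℕ+ × ℕ+ => p.1 * p.2) ⁻¹' sigmaSet n
      = sigmaSet n ×ˢ sigmaSet n := by
    ext ⟨a, b⟩
    simp only [Set.mem_preimage, sigmaSet, Set.mem_setOf_eq, Set.mem_prod,
      PNat.mul_coe]
    exact Nat.coprime_mul_iff_right
  rw [hpre]
  exact (TopologicalSpace.isOpen_generateFrom_of_mem (Set.mem_range_self n)).prod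
    (TopologicalSpace.isOpen_generateFrom_of_mem (Set.mem_range_self n))
end

section
/- The polynomial function f : ℕ → ℕ given by f(x) = x² + x is not continuous as a map from the Macías space M(ℕ) to itself. -/
open Topology

lemma key_cone : ∀ U : Set ℕ+, TopologicalSpace.GenerateOpen (Set.range sigmaSet) U →
    (1 : ℕ+) ∈ U → ∃ N : ℕ+, ∀ m : ℕ+, Nat.Coprime (N : ℕ) (m : ℕ) → m ∈ U := by
  intro U hU
  induction hU with
  | basic s hs =>
    obtain ⟨n, rfl⟩ := hs
    intro _
    exact ⟨n, fun m hm => hm⟩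
  | univ => exact fun _ => ⟨1, fun m _ => trivial⟩
  | inter s t _ _ ihs iht =>
    intro h1
    obtain ⟨N1, hN1⟩ := ihs h1.1
    obtain ⟨N2, hN2⟩ := iht h1.2
    refine ⟨N1 * N2, fun m hm => ?_⟩
    rw [PNat.mul_coe, Nat.coprime_mul_iff_left] at hm
    exact ⟨hN1 m hm.1, hN2 m hm.2⟩
  | sUnion S _ ih =>
    intro h1
    obtain ⟨s, hsS, hs1⟩ := h1
    obtain ⟨N, hN⟩ := ih s hsS hs1
    exact ⟨N, fun m hm => ⟨s, hsS, hN m hm⟩⟩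

theorem sq_add_self_discontinuous :
    ¬ Continuous[tauM, tauM] (fun x : ℕ+ => x ^ 2 + x) := by
  intro hc
  have h3open : IsOpen[tauM] (sigmaSet 3) :=
    TopologicalSpace.GenerateOpen.basic _ ⟨3, rfl⟩
  have hV : IsOpen[tauM] ((fun x : ℕ+ => x ^ 2 + x) ⁻¹' sigmaSet 3) :=
    @Continuous.isOpen_preimage _ _ tauM tauM _ hc (sigmaSet 3) h3open
  have hV' : TopologicalSpace.GenerateOpen (Set.range sigmaSet)
      ((fun x : ℕ+ => x ^ 2 + x) ⁻¹' sigmaSet 3) := hV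
  have h1mem : (1 : ℕ+) ∈ (fun x : ℕ+ => x ^ 2 + x) ⁻¹' sigmaSet 3 := by
    show Nat.Coprime ((3 : ℕ+) : ℕ) (((1 : ℕ+) ^ 2 + 1 : ℕ+) : ℕ)
    decide
  obtain ⟨N, hN⟩ := key_cone _ hV' h1mem
  -- take m = 6N - 1
  set m : ℕ+ := ⟨6 * (N : ℕ) - 1, by have := N.pos; omega⟩ with hm
  have hm1 : (m : ℕ) + 1 = 6 * (N : ℕ) := by
    have := N.pos
    show (6 * (N : ℕ) - 1) + 1 = 6 * (N : ℕ)
    omega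
  have hco : Nat.Coprime (N : ℕ) (m : ℕ) := by
    have h2 : Nat.gcd (N : ℕ) (m : ℕ) ∣ 6 * (N : ℕ) :=
      Dvd.dvd.mul_left (Nat.gcd_dvd_left _ _) 6
    have h3 : Nat.gcd (N : ℕ) (m : ℕ) ∣ (m : ℕ) := Nat.gcd_dvd_right _ _
    have h4 := Nat.dvd_sub h2 h3
    rw [show 6 * (N : ℕ) - (m : ℕ) = 1 by omega] at h4
    exact Nat.dvd_one.mp h4
  have hmem := hN m hco
  have hcop3 : Nat.Coprime ((3 : ℕ+) : ℕ) ((m ^ 2 + m : ℕ+) : ℕ) := hmem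
  have hdvd : (3 : ℕ) ∣ ((m ^ 2 + m : ℕ+) : ℕ) := by
    have : ((m ^ 2 + m : ℕ+) : ℕ) = (m : ℕ) * ((m : ℕ) + 1) := by
      push_cast
      ring
    rw [this, hm1]
    exact ⟨(m : ℕ) * (2 * (N : ℕ)), by ring⟩
  have : (3 : ℕ) = 1 := Nat.Coprime.eq_one_of_dvd hcop3 hdvd
  omega
end

section
/- The polynomial function f : ℕ → ℕ given by f(x) = x² + 4x + 2 is not continuous as a map from the Macías space M(ℕ) to itself. -/
open Topology

lemma one_mem_of_generateOpen {U : Set ℕ+}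
    (h : TopologicalSpace.GenerateOpen (Set.range sigmaSet) U) :
    U.Nonempty → (1 : ℕ+) ∈ U := by
  induction h with
  | basic s hs =>
      rintro ⟨x, hx⟩
      obtain ⟨n, rfl⟩ := hs
      simp [sigmaSet, Nat.Coprime]
  | univ => intro _; trivial
  | inter U V _ _ ihU ihV =>
      rintro ⟨x, hxU, hxV⟩
      exact ⟨ihU ⟨x, hxU⟩, ihV ⟨x, hxV⟩⟩
  | sUnion S _ ih =>
      rintro ⟨x, t, htS, hxt⟩
      exact ⟨t, htS, ih t htS ⟨x, hxt⟩⟩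

theorem example2_discontinuous :
    ¬ Continuous[tauM, tauM] (fun x : ℕ+ => x ^ 2 + 4 * x + 2) := by
  intro hcont
  have hopen : tauM.IsOpen (sigmaSet 7) :=
    TopologicalSpace.GenerateOpen.basic _ ⟨7, rfl⟩
  have hpre : tauM.IsOpen ((fun x : ℕ+ => x ^ 2 + 4 * x + 2) ⁻¹' sigmaSet 7) :=
    @Continuous.isOpen_preimage _ _ tauM tauM _ hcont _ hopen
  have hne : ((fun x : ℕ+ => x ^ 2 + 4 * x + 2) ⁻¹' sigmaSet 7).Nonempty := by
    refine ⟨3, ?_⟩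
    show Nat.Coprime ((7 : ℕ+) : ℕ) (((3 : ℕ+) ^ 2 + 4 * 3 + 2 : ℕ+) : ℕ)
    decide
  have h1 : (1 : ℕ+) ∈ (fun x : ℕ+ => x ^ 2 + 4 * x + 2) ⁻¹' sigmaSet 7 :=
    one_mem_of_generateOpen hpre hne
  have : Nat.Coprime ((7 : ℕ+) : ℕ) (((1 : ℕ+) ^ 2 + 4 * 1 + 2 : ℕ+) : ℕ) := h1
  revert this
  decide
end

section
/- For every a ∈ ℕ, the exponential function f : ℕ → ℕ given by f(x) = a^x is continuous as a map from the Macías space M(ℕ) to itself; indeed, for every prime p the preimage f⁻¹(σ_p) is either empty or all of ℕ. -/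
open Topology

lemma exp_preimage (a n : ℕ+) :
    (fun x : ℕ+ => a ^ (x : ℕ)) ⁻¹' sigmaSet n = ∅ ∨
      (fun x : ℕ+ => a ^ (x : ℕ)) ⁻¹' sigmaSet n = Set.univ := by
  by_cases h : Nat.Coprime (n : ℕ) (a : ℕ)
  · right
    ext x
    simp only [Set.mem_preimage, sigmaSet, Set.mem_setOf_eq, Set.mem_univ, iff_true,
      PNat.pow_coe]
    exact h.pow_right _
  · left
    ext x
    simp only [Set.mem_preimage, sigmaSet, Set.mem_setOf_eq, Set.mem_empty_iff_false,
      iff_false, PNat.pow_coe]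
    intro hc
    exact h ((Nat.coprime_pow_right_iff x.pos _ _).mp hc)

theorem exp_continuous (a : ℕ+) :
    Continuous[tauM, tauM] (fun x : ℕ+ => a ^ (x : ℕ)) ∧
      ∀ p : ℕ+, (p : ℕ).Prime →
        (fun x : ℕ+ => a ^ (x : ℕ)) ⁻¹' sigmaSet p = ∅ ∨
          (fun x : ℕ+ => a ^ (x : ℕ)) ⁻¹' sigmaSet p = Set.univ := by
  constructor
  · apply continuous_generateFrom_iff.mpr
    rintro s ⟨n, rfl⟩
    rcases exp_preimage a n with h | h <;> rw [h]
    · exact @isOpen_empty _ tauM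
    · exact @isOpen_univ _ tauM
  · exact fun p _ => exp_preimage a p
end

section
/- For all a, b ∈ ℕ with gcd(a, b) = 1, the arithmetic progression {a + b·k : k ∈ ℕ ∪ {0}} is a dense subset of the Macías space M(ℕ). -/
open Topology

lemma key_coprime (n a b : ℕ) (hn : n ≠ 0) (ha : a ≠ 0) (hab : Nat.Coprime a b) :
    ∃ k : ℕ, Nat.Coprime n (a + b * k) := by
  set d := Nat.gcd n (a ^ n) with hd
  have hdn : d ∣ n := Nat.gcd_dvd_left _ _
  have hd0 : d ≠ 0 := fun h => hn (Nat.eq_zero_of_gcd_eq_zero_left h)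
  set k := n / d with hk
  have hk0 : k ≠ 0 := by
    have := Nat.div_pos (Nat.le_of_dvd (Nat.pos_of_ne_zero hn) hdn) (Nat.pos_of_ne_zero hd0)
    omega
  have hpow : (a ^ n) ≠ 0 := pow_ne_zero _ ha
  have hfk : k.factorization = n.factorization - d.factorization := by
    rw [hk, Nat.factorization_div hdn]
  have hfd : d.factorization = n.factorization ⊓ (a ^ n).factorization := by
    rw [hd, Nat.factorization_gcd hn hpow]
  refine ⟨k, ?_⟩
  by_contra hcop
  obtain ⟨p, hp, hpn, hpx⟩ := Nat.Prime.not_coprime_iff_dvd.mp hcop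
  by_cases hpa : p ∣ a
  · -- p ∣ a, so p ∤ k and p ∤ b
    have hvk : k.factorization p = 0 := by
      have h1 : (a ^ n).factorization p = n * a.factorization p := by
        rw [Nat.factorization_pow]; rfl
      have h2 : 1 ≤ a.factorization p := (Nat.Prime.dvd_iff_one_le_factorization hp ha).mp hpa
      have h3 : n.factorization p < n := Nat.factorization_lt p hn
      have h4 : n.factorization p ≤ n * a.factorization p := by nlinarith
      have : d.factorization p = n.factorization p := by
        rw [hfd, Finsupp.inf_apply, h1]; exact min_eq_left h4
      rw [hfk, Finsupp.tsub_apply, this]; simp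
    have hpk : ¬ p ∣ k := by
      intro h
      have := (Nat.Prime.dvd_iff_one_le_factorization hp hk0).mp h
      omega
    have hpbk : p ∣ b * k := (Nat.dvd_add_right hpa).mp hpx
    rcases (Nat.Prime.dvd_mul hp).mp hpbk with h | h
    · exact Nat.Prime.one_lt hp |>.ne' (Nat.eq_one_of_dvd_coprimes hab hpa h)
    · exact hpk h
  · -- p ∤ a, so p ∣ k, contradiction with p ∣ a + b*k
    have hpan : ¬ p ∣ a ^ n := fun h => hpa (hp.dvd_of_dvd_pow h)
    have hvan : (a ^ n).factorization p = 0 := Nat.factorization_eq_zero_of_not_dvd hpan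
    have hvn : 1 ≤ n.factorization p := (Nat.Prime.dvd_iff_one_le_factorization hp hn).mp hpn
    have hvd : d.factorization p = 0 := by rw [hfd, Finsupp.inf_apply, hvan]; simp
    have hvk : 1 ≤ k.factorization p := by rw [hfk, Finsupp.tsub_apply, hvd]; omega
    have hpk : p ∣ k := (Nat.Prime.dvd_iff_one_le_factorization hp hk0).mpr hvk
    have : p ∣ a := (Nat.dvd_add_right (Dvd.dvd.mul_left hpk b)).mp (by rwa [Nat.add_comm] at hpx)
    exact hpa this

theorem arithmetic_progression_dense (a b : ℕ+) (hab : Nat.Coprime (a : ℕ) (b : ℕ)) :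
    @Dense ℕ+ tauM {x : ℕ+ | ∃ k : ℕ, (x : ℕ) = (a : ℕ) + (b : ℕ) * k} := by
  letI : TopologicalSpace ℕ+ := tauM
  have hB : TopologicalSpace.IsTopologicalBasis (Set.range sigmaSet) := by
    refine ⟨?_, ?_, rfl⟩
    · rintro _ ⟨m, rfl⟩ _ ⟨n, rfl⟩ x ⟨hxm, hxn⟩
      refine ⟨sigmaSet (m * n), ⟨m * n, rfl⟩, ?_, ?_⟩
      · show Nat.Coprime ((m * n : ℕ+) : ℕ) (x : ℕ)
        rw [PNat.mul_coe, Nat.coprime_mul_iff_left]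
        exact ⟨hxm, hxn⟩
      · intro y hy
        have : Nat.Coprime ((m : ℕ) * (n : ℕ)) (y : ℕ) := by
          simpa [sigmaSet] using hy
        rw [Nat.coprime_mul_iff_left] at this
        exact ⟨this.1, this.2⟩
    · apply Set.eq_univ_of_forall
      intro x
      exact ⟨sigmaSet 1, ⟨1, rfl⟩, by simp [sigmaSet, Nat.coprime_one_left]⟩
  rw [hB.dense_iff]
  rintro _ ⟨n, rfl⟩ -
  obtain ⟨k, hk⟩ := key_coprime (n : ℕ) (a : ℕ) (b : ℕ) n.ne_zero a.ne_zero hab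
  refine ⟨⟨(a : ℕ) + (b : ℕ) * k, by positivity⟩, ?_, ⟨k, rfl⟩⟩
  exact hk
end

section
/- The Macías topology τ_M on the positive natural numbers is strictly coarser than the Golomb topology τ_G; that is, every τ_M-open set is τ_G-open, but not every τ_G-open set is τ_M-open. -/
open Topology

/-- The Golomb topology on the positive naturals, generated by arithmetic progressions
`{a + b·k : k ∈ ℕ ∪ {0}}` with `gcd(a,b) = 1`. -/
def tauG : TopologicalSpace ℕ+ :=
  TopologicalSpace.generateFrom
    {S : Set ℕ+ | ∃ a b : ℕ+, Nat.Coprime (a : ℕ) (b : ℕ) ∧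
      S = {x : ℕ+ | ∃ k : ℕ, (x : ℕ) = (a : ℕ) + (b : ℕ) * k}}

lemma sigma_open_tauG (n : ℕ+) : IsOpen[tauG] (sigmaSet n) := by
  letI := tauG
  have hrw : sigmaSet n =
      ⋃ m ∈ sigmaSet n, {x : ℕ+ | ∃ k : ℕ, (x : ℕ) = (m : ℕ) + (n : ℕ) * k} := by
    ext x
    constructor
    · intro hx
      exact Set.mem_biUnion hx ⟨0, by simp⟩
    · simp only [Set.mem_iUnion]
      rintro ⟨m, hm, k, hk⟩
      show Nat.Coprime (n : ℕ) (x : ℕ)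
      rw [hk]
      exact (Nat.coprime_add_mul_left_right _ _ k).mpr hm
  rw [hrw]
  exact isOpen_biUnion fun m hm =>
    TopologicalSpace.GenerateOpen.basic _ ⟨m, n, hm.symm, rfl⟩

lemma one_mem_of_tauM_open {s : Set ℕ+} (h : IsOpen[tauM] s) (hne : s.Nonempty) :
    (1 : ℕ+) ∈ s := by
  have h' : TopologicalSpace.GenerateOpen (Set.range sigmaSet) s := h
  clear h
  revert hne
  induction h' with
  | basic u hu =>
      intro _
      obtain ⟨n, rfl⟩ := hu
      show Nat.Coprime (n : ℕ) ((1 : ℕ+) : ℕ)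
      simp [Nat.Coprime]
  | univ => intro _; trivial
  | inter s t _ _ ihs iht =>
      intro hne
      obtain ⟨x, hxs, hxt⟩ := hne
      exact ⟨ihs ⟨x, hxs⟩, iht ⟨x, hxt⟩⟩
  | sUnion S _ ih =>
      intro hne
      obtain ⟨x, t, htS, hxt⟩ := hne
      exact ⟨t, htS, ih t htS ⟨x, hxt⟩⟩

theorem tauM_strictly_coarser_than_tauG :
    (∀ s : Set ℕ+, IsOpen[tauM] s → IsOpen[tauG] s) ∧
      ¬ (∀ s : Set ℕ+, IsOpen[tauG] s → IsOpen[tauM] s) := by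
  constructor
  · have hle : tauG ≤ tauM := by
      apply le_generateFrom
      rintro s ⟨n, rfl⟩
      exact sigma_open_tauG n
    intro s hs
    exact hle s hs
  · intro h
    set s : Set ℕ+ := {x : ℕ+ | ∃ k : ℕ, (x : ℕ) = (2 : ℕ+) + (3 : ℕ+) * k} with hs
    have hopen : IsOpen[tauG] s :=
      TopologicalSpace.GenerateOpen.basic _ ⟨2, 3, by norm_num [Nat.Coprime], rfl⟩
    have hne : s.Nonempty := ⟨2, ⟨0, by simp⟩⟩
    have h1 : (1 : ℕ+) ∈ s := one_mem_of_tauM_open (h s hopen) hne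
    obtain ⟨k, hk⟩ := h1
    have h2 : ((2 : ℕ+) : ℕ) = 2 := rfl
    have h3 : ((3 : ℕ+) : ℕ) = 3 := rfl
    rw [h2, h3] at hk
    simp only [PNat.one_coe] at hk
    omega
end
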